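/- arXiv:0910.3351 — 2 statements merged into one kernel-verified Lean document; each statement's English description precedes it below -/
import Mathlib

section
/- Let k be an algebraic closure of F_p, Λ ≅ Z^s a lattice, and a ∈ k[Λ]. Every solution f in the span of characters of the equation a * f = 0 is a k-linear combination of characters χ : Λ → k^× satisfying Σ_v a(v) χ(v)^{-1} = 0. -/
/-!
Characters are eigenfunctions of every convolution operator: `a * χ = â(χ⁻¹) • χ`. Writing a
solution as `f = Σ c_χ χ`, the equation `a * f = 0` becomes `Σ c_χ â(χ⁻¹) χ = 0`, and Dedekind's
linear independence of characters forces `â(χ⁻¹) = 0` whenever `c_χ ≠ 0`.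
-/

open Multiplicative

namespace Convolution

variable {G k : Type*} [AddCommGroup G] [CommRing k]

def character (χ : Multiplicative G →* kˣ) : G → k := fun v => χ (ofAdd v)

/-- `â(χ⁻¹)` in the paper's notation. -/
def symbol (a : G →₀ k) (χ : Multiplicative G →* kˣ) : k :=
  a.sum fun v c => c * ((χ (ofAdd v))⁻¹ : kˣ)

/-- The operator `Δ_a`. -/
def convolution (a : G →₀ k) : (G → k) →ₗ[k] (G → k) :=
  a.sum fun v c => c • LinearMap.funLeft k k (· - v)

theorem convolution_apply (a : G →₀ k) (f : G → k) (u : G) :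
    convolution a f u = a.sum fun v c => c * f (u - v) := by
  simp [convolution, Finsupp.sum, Finset.sum_apply, LinearMap.funLeft_apply]

theorem convolution_character (a : G →₀ k) (χ : Multiplicative G →* kˣ) :
    convolution a (character χ) = symbol a χ • character χ := by
  funext u
  have hsub : ∀ v, character χ (u - v) = character χ u * ((χ (ofAdd v))⁻¹ : kˣ) := fun v => by
    simp [character, ofAdd_sub, div_eq_mul_inv]
  simp only [convolution_apply, hsub, symbol, Pi.smul_apply, smul_eq_mul, Finsupp.sum,
    Finset.sum_mul]
  exact Finset.sum_congr rfl fun v _ => by ring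

variable [IsDomain k]

theorem linearIndependent_character :
    LinearIndependent k (character : (Multiplicative G →* kˣ) → G → k) :=
  (linearIndependent_monoidHom (Multiplicative G) k).comp (fun χ => (Units.coeHom k).comp χ)
    fun _ _ h => MonoidHom.ext fun x => Units.ext (DFunLike.congr_fun h x)

theorem symbol_eq_zero_of_convolution_eq_zero {a : G →₀ k}
    {c : (Multiplicative G →* kˣ) →₀ k}
    (h : convolution a (Finsupp.linearCombination k character c) = 0)
    {χ : Multiplicative G →* kˣ} (hχ : c χ ≠ 0) : symbol a χ = 0 := by
  have hsum : ∑ ψ ∈ c.support, (c ψ * symbol a ψ) • character ψ = 0 := by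
    rw [Finsupp.linearCombination_apply, Finsupp.sum, map_sum] at h
    simpa only [map_smul, convolution_character, smul_smul] using h
  have := linearIndependent_iff'.mp (linearIndependent_character (G := G) (k := k)) c.support
    (fun ψ => c ψ * symbol a ψ) hsum χ (Finsupp.mem_support_iff.mpr hχ)
  exact (mul_eq_zero.mp this).resolve_left hχ

theorem mem_span_character_of_symbol_eq_zero {a : G →₀ k} {f : G → k}
    (hf : f ∈ Submodule.span k (Set.range character)) (h : convolution a f = 0) :
    f ∈ Submodule.span k {g | ∃ χ, symbol a χ = 0 ∧ g = character χ} := by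
  obtain ⟨c, rfl⟩ := Finsupp.mem_span_range_iff_exists_finsupp.mp hf
  exact Submodule.finsuppSum_mem _ _ _ _ fun χ hχ => Submodule.smul_mem _ _ <|
    Submodule.subset_span ⟨χ, symbol_eq_zero_of_convolution_eq_zero h hχ, rfl⟩

end Convolution

open Convolution in
theorem stmt_15_general
    (k : Type*) [Field k]
    (s : ℕ) (a : (Fin s → ℤ) →₀ k) (f : (Fin s → ℤ) → k)
    (hf : f ∈ Submodule.span k
      (Set.range (fun χ : Multiplicative (Fin s → ℤ) →* kˣ =>
        (fun v : Fin s → ℤ => (χ (ofAdd v) : k)))))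
    (hharm : ∀ u : Fin s → ℤ, (a.sum fun v c => c * f (u - v)) = 0) :
    f ∈ Submodule.span k
      {g : (Fin s → ℤ) → k | ∃ χ : Multiplicative (Fin s → ℤ) →* kˣ,
        (a.sum fun v c => c * ((χ (ofAdd v))⁻¹ : kˣ)) = 0 ∧
        g = fun v => (χ (ofAdd v) : k)} :=
  mem_span_character_of_symbol_eq_zero hf <|
    funext fun u => (convolution_apply a f u).trans (hharm u)

/-- Every solution, in the span of the characters, of the convolution equation
`a * f = 0` on `Λ ≅ ℤ^s` is a `k`-linear combination of characters `χ` satisfying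
`Σ_v a(v) χ(v)⁻¹ = 0` (i.e. of `Δ_a`-harmonic characters in the symbolic variety). -/
theorem stmt_15 (p : ℕ) [Fact p.Prime]
    (k : Type*) [Field k] [Algebra (ZMod p) k] [IsAlgClosure (ZMod p) k]
    (s : ℕ) (a : (Fin s → ℤ) →₀ k) (f : (Fin s → ℤ) → k)
    (hf : f ∈ Submodule.span k
      (Set.range (fun χ : Multiplicative (Fin s → ℤ) →* kˣ =>
        (fun v : Fin s → ℤ => (χ (ofAdd v) : k)))))
    (hharm : ∀ u : Fin s → ℤ, (a.sum fun v c => c * f (u - v)) = 0) :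
    f ∈ Submodule.span k
      {g : (Fin s → ℤ) → k | ∃ χ : Multiplicative (Fin s → ℤ) →* kˣ,
        (a.sum fun v c => c * ((χ (ofAdd v))⁻¹ : kˣ)) = 0 ∧
        g = fun v => (χ (ofAdd v) : k)} :=
  stmt_15_general k s a f hf hharm
end

section
/- Let k be an algebraic closure of F_p, Λ a lattice, and a ∈ k[Λ]. The convolution equation a * f = 0 has no nonzero solution f : Λ → k if and only if a = c·δ_v for some c ∈ k^× and v ∈ Λ (i.e., Δ_a is a nonzero scalar multiple of a shift), if and only if Δ_a is invertible on F(Λ,k). -/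
/-!
Shifts act bijectively, so only the converse needs an argument. If `a` has at least two terms,
pick an additive map `L : Λ → ℤ` that is injective on the support of `a` (a generic integer linear
form on `ℤ^s`). For `t ∈ kˣ` the exponential `u ↦ t ^ (-L u)` is an eigenfunction of `Δ_a` whose
eigenvalue is the Laurent polynomial `∑ a_v t ^ (L v)`. That Laurent polynomial has at least two
terms, hence a root `t ≠ 0` in the algebraically closed field `k`, and the corresponding
exponential is a nonzero solution of `a * f = 0`.
-/

/-- The convolution operator `Δ_a` acting on all functions `Λ → k`. -/
noncomputable def convMap {k Λ : Type*} [Field k] [AddCommGroup Λ] (a : Λ →₀ k) :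
    (Λ → k) →ₗ[k] (Λ → k) where
  toFun f := fun u => a.sum fun v c => c * f (u - v)
  map_add' f g := by
    funext u
    simp [Finsupp.sum, mul_add, Finset.sum_add_distrib]
  map_smul' r f := by
    funext u
    simp [Finsupp.sum, Finset.mul_sum, mul_left_comm]

open Finset Polynomial

theorem exists_dotProduct_ne_zero {ι : Type*} [Fintype ι] [DecidableEq ι]
    (F : Finset (ι → ℤ)) (hF : ∀ d ∈ F, d ≠ 0) : ∃ m : ι → ℤ, ∀ d ∈ F, m ⬝ᵥ d ≠ 0 := by
  induction F using Finset.induction_on with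
  | empty => exact ⟨0, by simp⟩
  | insert d F _ ih =>
    obtain ⟨m, hm⟩ := ih fun d' hd' => hF d' (mem_insert_of_mem hd')
    obtain ⟨i, hi⟩ : ∃ i, d i ≠ 0 := Function.ne_iff.mp (hF d (mem_insert_self d F))
    -- perturb `m` in direction `i` by an integer `c` avoiding the finitely many bad values
    obtain ⟨c, hc⟩ := Infinite.exists_notMem_finset
      ((insert d F).image fun d' => -(m ⬝ᵥ d') / d' i)
    refine ⟨m + Pi.single i c, fun d' hd' h0 => ?_⟩
    rw [add_dotProduct, single_dotProduct] at h0
    rcases eq_or_ne (d' i) 0 with hdi | hdi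
    · rw [hdi, mul_zero, add_zero] at h0
      rcases mem_insert.mp hd' with rfl | hd'F
      · exact hi hdi
      · exact hm d' hd'F h0
    · refine hc (mem_image.mpr ⟨d', hd', ?_⟩)
      rw [show -(m ⬝ᵥ d') = c * d' i by linarith, Int.mul_ediv_cancel _ hdi]

theorem exists_addMonoidHom_injOn {ι : Type*} [Fintype ι] (S : Finset (ι → ℤ)) :
    ∃ L : (ι → ℤ) →+ ℤ, Set.InjOn L S := by
  classical
  obtain ⟨m, hm⟩ := exists_dotProduct_ne_zero
    (((S ×ˢ S).image fun x => x.1 - x.2).filter (· ≠ 0)) fun _ hd => (mem_filter.mp hd).2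
  refine ⟨AddMonoidHom.mk' (m ⬝ᵥ ·) (dotProduct_add m), fun x hx y hy hxy => ?_⟩
  by_contra hne
  refine hm (x - y) (mem_filter.mpr ⟨mem_image.mpr ⟨(x, y), mem_product.mpr ⟨hx, hy⟩, rfl⟩,
    sub_ne_zero.mpr hne⟩) ?_
  simpa [dotProduct_sub, sub_eq_zero] using hxy

/-- A Laurent polynomial with at least two terms has a root in `kˣ`. -/
theorem exists_ne_zero_sum_zpow_eq_zero {k : Type*} [Field k] [IsAlgClosed k] (b : ℤ →₀ k)
    (hb : 1 < #b.support) : ∃ t : k, t ≠ 0 ∧ (b.sum fun n c => c * t ^ n) = 0 := by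
  classical
  have hne : b.support.Nonempty := card_pos.mp (by omega)
  set n₀ := b.support.min' hne
  have hn₀ : ∀ n ∈ b.support, n₀ ≤ n := fun n hn => min'_le _ _ hn
  -- `P = X ^ (-n₀) * b`, an honest polynomial
  set P : k[X] := b.sum fun n c => C c * X ^ (n - n₀).toNat
  have hcoeff (j : ℕ) : P.coeff j = b (j + n₀) := by
    simp only [P, Finsupp.sum, finsetSum_coeff, coeff_C_mul_X_pow]
    rw [sum_eq_single (j + n₀)]
    · simp
    · intro n hn hne
      have := hn₀ n hn
      rw [if_neg (by omega)]
    · intro h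
      rw [Finsupp.notMem_support_iff.mp h, ite_self]
  have hP0 : P.coeff 0 ≠ 0 := by
    simpa [hcoeff] using Finsupp.mem_support_iff.mp (b.support.min'_mem hne)
  obtain ⟨n₁, hn₁, hn₁₀⟩ := b.support.exists_mem_ne hb n₀
  have hPdeg : P.degree ≠ 0 := by
    have h₁ : P.coeff (n₁ - n₀).toNat ≠ 0 := by
      rw [hcoeff, show ((n₁ - n₀).toNat : ℤ) + n₀ = n₁ by have := hn₀ n₁ hn₁; omega]
      exact Finsupp.mem_support_iff.mp hn₁
    have := le_natDegree_of_ne_zero h₁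
    have := hn₀ n₁ hn₁
    exact (natDegree_pos_iff_degree_pos.mp (by omega)).ne'
  obtain ⟨t, ht⟩ := IsAlgClosed.exists_root P hPdeg
  have ht0 : t ≠ 0 := by
    rintro rfl
    exact hP0 (by rwa [coeff_zero_eq_eval_zero])
  refine ⟨t, ht0, ?_⟩
  calc (b.sum fun n c => c * t ^ n) = t ^ n₀ * P.eval t := by
        simp only [P, Finsupp.sum, eval_finsetSum, eval_mul, eval_C, eval_pow, eval_X, mul_sum]
        refine sum_congr rfl fun n hn => ?_
        rw [← zpow_natCast, mul_left_comm, ← zpow_add₀ ht0,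
          show n₀ + ((n - n₀).toNat : ℤ) = n by have := hn₀ n hn; omega]
    _ = 0 := by rw [ht.eq_zero, mul_zero]

section convMap

variable {k Λ : Type*} [Field k] [AddCommGroup Λ]

theorem convMap_apply (a : Λ →₀ k) (f : Λ → k) (u : Λ) :
    convMap a f u = a.sum fun v c => c * f (u - v) :=
  rfl

@[simp]
theorem convMap_zero : convMap (0 : Λ →₀ k) = 0 := by
  ext f u
  simp [convMap_apply]

@[simp]
theorem convMap_single_apply (v : Λ) (c : k) (f : Λ → k) (u : Λ) :
    convMap (Finsupp.single v c) f u = c * f (u - v) := by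
  rw [convMap_apply, Finsupp.sum_single_index (zero_mul _)]

theorem bijective_convMap_single (v : Λ) {c : k} (hc : c ≠ 0) :
    Function.Bijective (convMap (Finsupp.single v c)) := by
  refine Function.bijective_iff_has_inverse.mpr
    ⟨convMap (Finsupp.single (-v) c⁻¹), fun f => ?_, fun f => ?_⟩ <;>
  · funext u
    simp [hc]

theorem convMap_zpow_neg (a : Λ →₀ k) (L : Λ →+ ℤ) {t : k} (ht : t ≠ 0) :
    convMap a (fun u => t ^ (-L u)) =
      fun u => t ^ (-L u) * (a.mapDomain L).sum fun n c => c * t ^ n := by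
  funext u
  rw [convMap_apply, Finsupp.sum_mapDomain_index (fun _ => zero_mul _) (fun _ _ _ => add_mul ..),
    Finsupp.mul_sum]
  refine Finsupp.sum_congr fun v _ => ?_
  rw [map_sub, neg_sub, sub_eq_add_neg, add_comm, zpow_add₀ ht]
  ring

theorem exists_ne_zero_convMap_eq_zero [IsAlgClosed k] {a : Λ →₀ k} (L : Λ →+ ℤ)
    (hL : Set.InjOn L a.support) (ha : 1 < #a.support) : ∃ f ≠ 0, convMap a f = 0 := by
  classical
  have hcard : #(a.mapDomain L).support = #a.support := by
    rw [Finsupp.mapDomain_support_of_injOn a hL, card_image_of_injOn hL]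
  obtain ⟨t, ht0, ht⟩ := exists_ne_zero_sum_zpow_eq_zero (a.mapDomain L) (hcard ▸ ha)
  refine ⟨fun u => t ^ (-L u), fun h => ?_, by
    rw [convMap_zpow_neg a L ht0, ht]
    exact funext fun _ => mul_zero _⟩
  simpa using congrFun h 0

theorem exists_eq_single_of_injective_convMap [IsAlgClosed k]
    (hΛ : ∀ S : Finset Λ, ∃ L : Λ →+ ℤ, Set.InjOn L S) {a : Λ →₀ k}
    (h : Function.Injective (convMap a)) : ∃ (c : kˣ) (v : Λ), a = Finsupp.single v (c : k) := by
  rcases lt_trichotomy #a.support 1 with ha | ha | ha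
  · obtain rfl : a = 0 := Finsupp.support_eq_empty.mp (card_eq_zero.mp (by omega))
    exact absurd (@h 1 0 (by simp)) one_ne_zero
  · obtain ⟨v, c, hc, rfl⟩ := Finsupp.card_support_eq_one'.mp ha
    exact ⟨Units.mk0 c hc, v, rfl⟩
  · obtain ⟨L, hL⟩ := hΛ a.support
    obtain ⟨f, hf, hf0⟩ := exists_ne_zero_convMap_eq_zero L hL ha
    exact absurd ((injective_iff_map_eq_zero _).mp h f hf0) hf

theorem injective_convMap_iff_exists_eq_single [IsAlgClosed k]
    (hΛ : ∀ S : Finset Λ, ∃ L : Λ →+ ℤ, Set.InjOn L S) {a : Λ →₀ k} :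
    Function.Injective (convMap a) ↔ ∃ (c : kˣ) (v : Λ), a = Finsupp.single v (c : k) :=
  ⟨exists_eq_single_of_injective_convMap hΛ, fun ⟨c, v, ha⟩ =>
    ha ▸ (bijective_convMap_single v c.ne_zero).injective⟩

end convMap

theorem stmt_16_general (p : ℕ) [Fact p.Prime]
    (k : Type*) [Field k] [Algebra (ZMod p) k] [IsAlgClosure (ZMod p) k]
    (s : ℕ) (a : (Fin s → ℤ) →₀ k) :
    ((∀ f : (Fin s → ℤ) → k, convMap a f = 0 → f = 0) ↔
        ∃ (c : kˣ) (v : Fin s → ℤ), a = Finsupp.single v (c : k)) ∧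
      ((∃ (c : kˣ) (v : Fin s → ℤ), a = Finsupp.single v (c : k)) ↔
        Function.Bijective (convMap a)) := by
  have : IsAlgClosed k := IsAlgClosure.isAlgClosed (ZMod p)
  have key : Function.Injective (convMap a) ↔ _ :=
    injective_convMap_iff_exists_eq_single exists_addMonoidHom_injOn
  rw [← injective_iff_map_eq_zero]
  exact ⟨key, fun ⟨c, v, ha⟩ => ha ▸ bijective_convMap_single v c.ne_zero,
    fun h => key.mp h.injective⟩

/-- For `a ∈ k[Λ]` with `k` the algebraic closure of `F_p` and `Λ ≅ ℤ^s` (`s > 0`):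
the equation `a * f = 0` has no nonzero solution `f : Λ → k` iff `a = c·δ_v` for some
`c ∈ kˣ`, `v ∈ Λ` (i.e. `Δ_a` is a nonzero multiple of a shift), iff `Δ_a` is invertible
on the space of all functions `Λ → k`. -/
theorem stmt_16 (p : ℕ) [Fact p.Prime]
    (k : Type*) [Field k] [Algebra (ZMod p) k] [IsAlgClosure (ZMod p) k]
    (s : ℕ) (hs : 0 < s) (a : (Fin s → ℤ) →₀ k) :
    ((∀ f : (Fin s → ℤ) → k, convMap a f = 0 → f = 0) ↔
        ∃ (c : kˣ) (v : Fin s → ℤ), a = Finsupp.single v (c : k)) ∧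
      ((∃ (c : kˣ) (v : Fin s → ℤ), a = Finsupp.single v (c : k)) ↔
        Function.Bijective (convMap a)) :=
  stmt_16_general p k s a
end
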